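/- Fix q ∈ (0,1), θ ∈ (0, π/2) and σ ∈ (0,1), and write σ̄ := 1 − σ. Define A : ℝ → ℝ by A(β) := σ̄·cos²θ + σ·sin²θ + 2·Real.sqrt(σ̄·σ)·cos θ·sin θ·cos β, define κ : ℝ × ℝ → ℝ by κ(α,β) := q·σ̄·cos²θ + σ·sin²θ + q·Real.sqrt(σ̄·σ)·cos θ·sin θ·(cos β + cos(β−α)), and define J : ℝ × ℝ → ℝ by J(α,β) := q·A(β)·Real.logb 2 (A(β)) + q·A(β−α)·Real.logb 2 (A(β−α)) + 2·(1−q)·σ·sin²θ·Real.logb 2 (σ·sin²θ) − 2·κ(α,β)·Real.logb 2 (κ(α,β)) − (1−q)·cos²θ·Real.logb 2 (1−q). If (α,β) ∈ ℝ × ℝ is a local maximum of J, then sin β = 0 and sin(β − α) = 0. -/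

import Mathlib

/-- `A θ σ β = |√(1−σ) cos θ + e^{iβ} √σ sin θ|²`. -/
noncomputable def A (θ σ β : ℝ) : ℝ :=
  (1 - σ) * Real.cos θ ^ 2 + σ * Real.sin θ ^ 2
    + 2 * Real.sqrt ((1 - σ) * σ) * Real.cos θ * Real.sin θ * Real.cos β

/-- The mixture weight κ(α,β) appearing in the symmetrized information functional. -/
noncomputable def kappa (q θ σ α β : ℝ) : ℝ :=
  q * (1 - σ) * Real.cos θ ^ 2 + σ * Real.sin θ ^ 2
    + q * Real.sqrt ((1 - σ) * σ) * Real.cos θ * Real.sin θ * (Real.cos β + Real.cos (β - α))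

/-- The symmetrized information functional `J(α,β)` of the one-sender
coherence-assisted protocol. -/
noncomputable def J (q θ σ : ℝ) (p : ℝ × ℝ) : ℝ :=
  q * A θ σ p.2 * Real.logb 2 (A θ σ p.2)
    + q * A θ σ (p.2 - p.1) * Real.logb 2 (A θ σ (p.2 - p.1))
    + 2 * (1 - q) * σ * Real.sin θ ^ 2 * Real.logb 2 (σ * Real.sin θ ^ 2)
    - 2 * kappa q θ σ p.1 p.2 * Real.logb 2 (kappa q θ σ p.1 p.2)
    - (1 - q) * Real.cos θ ^ 2 * Real.logb 2 (1 - q)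

/-!
On a line where `β - α` (or `β`) is fixed, `J` is, up to a constant and the factor `1 / log 2`, the
function `x ↦ q φ(m + c x) - 2 φ(n + q c x / 2)` of `x = cos β`, where `φ u = u log u`,
`m + c x = A` and `n + q c x / 2 = κ`. Its `x`-derivative is `q c (log A - log κ)`, so at a critical
point with `sin β ≠ 0` we get `A = κ`. Beyond that point `A` grows faster than `κ`, so the function
is strictly increasing in `x`; as `cos` takes larger values arbitrarily close to `β`, the point is
not a local maximum. The symmetry `J(-α, β - α) = J(α, β)` exchanges the roles of `β` and `β - α`.
-/

open Real Filter Set Topology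

noncomputable def mulLogGap (q c m n x : ℝ) : ℝ :=
  q * ((m + c * x) * log (m + c * x)) - 2 * ((n + q * c / 2 * x) * log (n + q * c / 2 * x))

section mulLogGap

variable {q c m n : ℝ}

theorem hasDerivAt_mulLogGap {x : ℝ} (ha : m + c * x ≠ 0) (hk : n + q * c / 2 * x ≠ 0) :
    HasDerivAt (mulLogGap q c m n) (q * c * (log (m + c * x) - log (n + q * c / 2 * x))) x := by
  have hA : HasDerivAt (fun x => m + c * x) c x := by
    simpa using ((hasDerivAt_id x).const_mul c).const_add m
  have hK : HasDerivAt (fun x => n + q * c / 2 * x) (q * c / 2) x := by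
    simpa using ((hasDerivAt_id x).const_mul (q * c / 2)).const_add n
  refine ((((hasDerivAt_mul_log ha).comp x hA).const_mul q).sub
    (((hasDerivAt_mul_log hk).comp x hK).const_mul 2)).congr_deriv ?_
  ring

theorem strictMonoOn_mulLogGap {x₀ : ℝ} (hq : 0 < q) (hq2 : q < 2) (hc : 0 < c)
    (hx₀ : m + c * x₀ = n + q * c / 2 * x₀) (hpos : 0 < m + c * x₀) :
    StrictMonoOn (mulLogGap q c m n) (Ici x₀) := by
  have hk : ∀ x ∈ Ici x₀, 0 < n + q * c / 2 * x := fun x hx => by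
    nlinarith [mul_nonneg (mul_pos hq hc).le (sub_nonneg.2 (mem_Ici.1 hx))]
  have ha : ∀ x ∈ Ici x₀, 0 < m + c * x := fun x hx => by
    nlinarith [mul_nonneg hc.le (sub_nonneg.2 (mem_Ici.1 hx))]
  have hlt : ∀ x, x₀ < x → n + q * c / 2 * x < m + c * x := fun x hx => by
    nlinarith [mul_pos (mul_pos hc (sub_pos.2 hx)) (sub_pos.2 hq2)]
  have hderiv := fun x hx => hasDerivAt_mulLogGap (ha x hx).ne' (hk x hx).ne'
  refine strictMonoOn_of_hasDerivWithinAt_pos (convex_Ici x₀)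
    (fun x hx => (hderiv x hx).continuousAt.continuousWithinAt)
    (fun x hx => (hderiv x (interior_subset hx)).hasDerivWithinAt) fun x hx => ?_
  rw [interior_Ici] at hx
  exact mul_pos (mul_pos hq hc) (sub_pos.2 (log_lt_log (hk x (mem_Ici.2 hx.le)) (hlt x hx)))

end mulLogGap

theorem not_isLocalMax_comp_of_strictMonoOn {g ψ : ℝ → ℝ} {g' y : ℝ} (hg : HasDerivAt g g' y)
    (hg' : g' ≠ 0) (hψ : StrictMonoOn ψ (Ici (g y))) : ¬IsLocalMax (ψ ∘ g) y := by
  intro hmax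
  have hfreq : ∃ᶠ t in 𝓝 y, g y < g t := by
    have : ¬IsLocalMax g y := fun h => hg' (h.hasDerivAt_eq_zero hg)
    simpa [IsLocalMax, IsMaxFilter, Filter.not_eventually] using this
  obtain ⟨t, hlt, hle⟩ := (hfreq.and_eventually hmax).exists
  exact (hψ self_mem_Ici hlt.le hlt).not_ge hle

theorem isLocalMax_of_div_add_const {f : ℝ → ℝ} {a K C : ℝ} (hK : 0 < K)
    (h : IsLocalMax (fun x => f x / K + C) a) : IsLocalMax f a :=
  h.mono fun _ hx => (div_le_div_iff_of_pos_right hK).1 (by linarith)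

theorem not_isLocalMax_mulLogGap_comp_cos {q c m n Y : ℝ} (hq : 0 < q) (hq2 : q < 2)
    (hc : 0 < c) (hY : sin Y ≠ 0) (ha : 0 < m + c * cos Y) (hk : 0 < n + q * c / 2 * cos Y) :
    ¬IsLocalMax (fun β => mulLogGap q c m n (cos β)) Y := by
  intro hmax
  have hcrit := hmax.hasDerivAt_eq_zero
    ((hasDerivAt_mulLogGap ha.ne' hk.ne').comp Y (hasDerivAt_cos Y))
  have heq : m + c * cos Y = n + q * c / 2 * cos Y := by
    refine log_injOn_pos ha hk (sub_eq_zero.1 ?_)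
    simpa [hY, hq.ne', hc.ne'] using hcrit
  exact not_isLocalMax_comp_of_strictMonoOn (hasDerivAt_cos Y) (neg_ne_zero.2 hY)
    (strictMonoOn_mulLogGap hq hq2 hc heq ha) hmax

section model

variable {q θ σ : ℝ}

theorem two_mul_sqrt_mul_cos_mul_sin_pos (hθ : θ ∈ Ioo 0 (π / 2)) (hσ : σ ∈ Ioo 0 1) :
    0 < 2 * √((1 - σ) * σ) * cos θ * sin θ := by
  have hcos : 0 < cos θ := cos_pos_of_mem_Ioo ⟨by linarith [hθ.1, pi_pos], hθ.2⟩
  have hsin : 0 < sin θ := sin_pos_of_pos_of_lt_pi hθ.1 (by linarith [hθ.2, pi_pos])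
  have : 0 < √((1 - σ) * σ) := sqrt_pos.2 (mul_pos (sub_pos.2 hσ.2) hσ.1)
  positivity

theorem A_pi (hσ : σ ∈ Icc 0 1) : A θ σ π = (√(1 - σ) * cos θ - √σ * sin θ) ^ 2 := by
  rw [A, cos_pi, sqrt_mul (sub_nonneg.2 hσ.2)]
  linear_combination (-cos θ ^ 2) * sq_sqrt (sub_nonneg.2 hσ.2) - sin θ ^ 2 * sq_sqrt hσ.1

theorem A_pos (hθ : θ ∈ Ioo 0 (π / 2)) (hσ : σ ∈ Ioo 0 1) {β : ℝ} (hβ : -1 < cos β) :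
    0 < A θ σ β := by
  have hπ := A_pi (θ := θ) (Ioo_subset_Icc_self hσ)
  have hc := two_mul_sqrt_mul_cos_mul_sin_pos hθ hσ
  rw [A, cos_pi] at hπ
  unfold A
  nlinarith [sq_nonneg (√(1 - σ) * cos θ - √σ * sin θ), mul_pos hc (neg_lt_iff_pos_add'.1 hβ)]

theorem kappa_pos (hq : q ∈ Ioo 0 1) (hθ : θ ∈ Ioo 0 (π / 2)) (hσ : σ ∈ Ioo 0 1) (α β : ℝ) :
    0 < kappa q θ σ α β := by
  have hπ := A_pi (θ := θ) (Ioo_subset_Icc_self hσ)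
  have hc := two_mul_sqrt_mul_cos_mul_sin_pos hθ hσ
  have hsin : 0 < σ * sin θ ^ 2 :=
    mul_pos hσ.1 (pow_pos (sin_pos_of_pos_of_lt_pi hθ.1 (by linarith [hθ.2, pi_pos])) 2)
  rw [A, cos_pi] at hπ
  unfold kappa
  nlinarith [mul_nonneg hq.1.le (sq_nonneg (√(1 - σ) * cos θ - √σ * sin θ)),
    mul_pos (sub_pos.2 hq.2) hsin, mul_nonneg (mul_pos hq.1 hc).le
      (add_nonneg (neg_le_iff_add_nonneg'.1 (neg_one_le_cos β))
        (neg_le_iff_add_nonneg'.1 (neg_one_le_cos (β - α))))]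

end model

theorem kappa_neg_sub (q θ σ α β : ℝ) : kappa q θ σ (-α) (β - α) = kappa q θ σ α β := by
  simp only [kappa, sub_neg_eq_add, sub_add_cancel]
  ring

theorem J_comp_swap (q θ σ : ℝ) : J q θ σ ∘ (fun x => (-x.1, x.2 - x.1)) = J q θ σ := by
  funext x
  simp only [Function.comp_apply, J, kappa_neg_sub, sub_neg_eq_add, sub_add_cancel]
  ring

theorem J_comp_line (q θ σ δ : ℝ) : ∃ C, J q θ σ ∘ (fun β => (β - δ, β)) = fun β =>
    mulLogGap q (2 * √((1 - σ) * σ) * cos θ * sin θ) ((1 - σ) * cos θ ^ 2 + σ * sin θ ^ 2)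
      (q * (1 - σ) * cos θ ^ 2 + σ * sin θ ^ 2
        + q * (2 * √((1 - σ) * σ) * cos θ * sin θ) / 2 * cos δ) (cos β) / log 2 + C := by
  refine ⟨q * A θ σ δ * logb 2 (A θ σ δ)
    + 2 * (1 - q) * σ * sin θ ^ 2 * logb 2 (σ * sin θ ^ 2)
    - (1 - q) * cos θ ^ 2 * logb 2 (1 - q), ?_⟩
  funext β
  simp only [Function.comp_apply, J, A, kappa, mulLogGap, sub_sub_cancel, logb]
  ring_nf

theorem sin_eq_zero_of_isLocalMax_J {q θ σ : ℝ} (hq : q ∈ Ioo 0 1) (hθ : θ ∈ Ioo 0 (π / 2))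
    (hσ : σ ∈ Ioo 0 1) {p : ℝ × ℝ} (hmax : IsLocalMax (J q θ σ) p) : sin p.2 = 0 := by
  by_contra hY
  obtain ⟨C, hJ⟩ := J_comp_line q θ σ (p.2 - p.1)
  have hline : IsLocalMax (J q θ σ ∘ fun β => (β - (p.2 - p.1), β)) p.2 :=
    IsLocalMax.comp_continuous (by simpa using hmax) (by fun_prop)
  rw [hJ] at hline
  have hcos : -1 < cos p.2 :=
    (neg_one_le_cos _).lt_of_ne' fun h => hY (sin_eq_zero_iff_cos_eq.2 (Or.inr h))
  refine not_isLocalMax_mulLogGap_comp_cos hq.1 (by linarith [hq.2])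
    (two_mul_sqrt_mul_cos_mul_sin_pos hθ hσ) hY (A_pos hθ hσ hcos) ?_
    (isLocalMax_of_div_add_const (log_pos one_lt_two) hline)
  convert kappa_pos hq hθ hσ p.1 p.2 using 1
  unfold kappa
  ring

/-- The paper's Lemma (optimal-alpha-beta): `J` is locally maximized only when
β and β − α are both multiples of π. -/
theorem localMax_J_implies_sin_eq_zero (q θ σ : ℝ)
    (hq : q ∈ Set.Ioo (0 : ℝ) 1) (hθ : θ ∈ Set.Ioo (0 : ℝ) (Real.pi / 2))
    (hσ : σ ∈ Set.Ioo (0 : ℝ) 1)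
    (p : ℝ × ℝ) (hmax : IsLocalMax (J q θ σ) p) :
    Real.sin p.2 = 0 ∧ Real.sin (p.2 - p.1) = 0 := by
  refine ⟨sin_eq_zero_of_isLocalMax_J hq hθ hσ hmax, ?_⟩
  have hswap : IsLocalMax (J q θ σ ∘ fun x => (-x.1, x.2 - x.1)) (-p.1, p.2 - p.1) := by
    refine IsLocalMax.comp_continuous ?_ (by fun_prop)
    simpa using hmax
  rw [J_comp_swap] at hswap
  exact sin_eq_zero_of_isLocalMax_J (p := (-p.1, p.2 - p.1)) hq hθ hσ hswap
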